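/- Let p be a prime with p ≥ 5. The number of orbits of the dihedral group of order 12 acting on (Z/p × Z/p) \ {(0,0)}, where a rotation of order 6 acts by (l,m) ↦ (m, m-l) and a reflection acts by (l,m) ↦ (m,l), is (p-1)(p+7)/12. -/

import Mathlib

/-- Nonzero vectors in `(ZMod p)²`. -/
def NZ (p : ℕ) : Type := {v : ZMod p × ZMod p // v ≠ 0}

/-- Restrict a permutation of `(ZMod p)²` fixing `0` to the nonzero vectors. -/
def restrictPerm {p : ℕ} (e : Equiv.Perm (ZMod p × ZMod p)) (h : e 0 = 0) :
    Equiv.Perm (NZ p) :=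
  e.subtypePerm (by
    intro x
    constructor
    · intro hex hx
      subst hx
      exact hex h
    · intro hx hex
      exact hx (e.injective (hex.trans h.symm)))

/-- The order-6 rotation `(l, m) ↦ (m, m - l)` on `(ZMod p)²`. -/
def rot6 (p : ℕ) : Equiv.Perm (ZMod p × ZMod p) where
  toFun v := (v.2, v.2 - v.1)
  invFun v := (v.1 - v.2, v.1)
  left_inv v := by simp
  right_inv v := by simp

/-- The rotation `(l, m) ↦ (m, m - l)` on nonzero vectors. -/
def rot6P (p : ℕ) : Equiv.Perm (NZ p) :=
  restrictPerm (rot6 p) (by simp [rot6])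

/-- The swap `(l, m) ↦ (m, l)` on nonzero vectors. -/
def tauP (p : ℕ) : Equiv.Perm (NZ p) :=
  restrictPerm (Equiv.prodComm _ _) rfl

namespace Dih12

variable {p : ℕ}

@[simp] lemma rot6P_apply (v : NZ p) :
    (rot6P p v).1 = ((v.1).2, (v.1).2 - (v.1).1) := rfl

@[simp] lemma tauP_apply (v : NZ p) :
    (tauP p v).1 = ((v.1).2, (v.1).1) := rfl

lemma nz_ext {a b : NZ p} (h : a.1 = b.1) : a = b := Subtype.ext h

lemma sig6 : (rot6P p) ^ 6 = 1 := by
  apply Equiv.ext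
  intro v
  apply nz_ext
  have : (rot6P p) ^ 6 = rot6P p * (rot6P p * (rot6P p * (rot6P p * (rot6P p * rot6P p)))) := by
    simp [pow_succ, mul_assoc]
  rw [this]
  show ((rot6P p * (rot6P p * (rot6P p * (rot6P p * (rot6P p * rot6P p))))) v).1 = v.1
  simp only [Equiv.Perm.mul_apply, rot6P_apply]
  ext <;> simp <;> ring

lemma tau2 : (tauP p) * tauP p = 1 := by
  apply Equiv.ext
  intro v
  apply nz_ext
  simp [Equiv.Perm.mul_apply]

lemma tau_inv : (tauP p)⁻¹ = tauP p := inv_eq_of_mul_eq_one_left tau2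

lemma stsig : rot6P p * tauP p * rot6P p = tauP p := by
  apply Equiv.ext
  intro v
  apply nz_ext
  show ((rot6P p * tauP p * rot6P p) v).1 = (tauP p v).1
  simp only [Equiv.Perm.mul_apply, rot6P_apply, tauP_apply]
  ext <;> simp <;> ring

lemma rel : tauP p * rot6P p * (tauP p)⁻¹ = (rot6P p)⁻¹ := by
  rw [tau_inv]
  apply eq_inv_of_mul_eq_one_right
  calc rot6P p * (tauP p * rot6P p * tauP p)
      = rot6P p * tauP p * rot6P p * tauP p := by group
    _ = tauP p * tauP p := by rw [stsig]
    _ = 1 := tau2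

def psi (p : ℕ) (i : ZMod 6) : Equiv.Perm (NZ p) := rot6P p ^ i.val

lemma pow_mod' (a : ℕ) : rot6P p ^ (a % 6) = rot6P p ^ a := by
  conv_rhs => rw [← Nat.div_add_mod a 6]
  rw [pow_add, pow_mul, sig6, one_pow, one_mul]

lemma psi_add (i j : ZMod 6) : psi p (i + j) = psi p i * psi p j := by
  rw [psi, psi, psi, ZMod.val_add, pow_mod', pow_add]

lemma psi_zero : psi p 0 = 1 := by
  rw [psi, ZMod.val_zero, pow_zero]

lemma psi_neg (i : ZMod 6) : psi p (-i) = (psi p i)⁻¹ := by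
  apply eq_inv_of_mul_eq_one_left
  rw [← psi_add, neg_add_cancel, psi_zero]

lemma conj_psi (i : ZMod 6) : tauP p * psi p i * tauP p = psi p (-i) := by
  have h1 : tauP p * psi p i * tauP p = tauP p * rot6P p ^ i.val * (tauP p)⁻¹ := by
    rw [tau_inv]; rfl
  rw [h1, ← conj_pow, rel, inv_pow, psi_neg]
  rfl

lemma psi_tau (i : ZMod 6) : psi p i * tauP p = tauP p * psi p (-i) := by
  calc psi p i * tauP p = tauP p * (tauP p * psi p i * tauP p) := by
        rw [← mul_assoc, ← mul_assoc, tau2, one_mul]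
    _ = tauP p * psi p (-i) := by rw [conj_psi]

def phi (p : ℕ) : DihedralGroup 6 →* Equiv.Perm (NZ p) where
  toFun x := match x with
    | .r i => psi p i
    | .sr i => tauP p * psi p i
  map_one' := by
    show psi p 0 = 1
    exact psi_zero
  map_mul' := by
    rintro (i | i) (j | j)
    · show psi p (i + j) = psi p i * psi p j
      exact psi_add i j
    · show tauP p * psi p (j - i) = psi p i * (tauP p * psi p j)
      rw [← mul_assoc, psi_tau, mul_assoc, ← psi_add, neg_add_eq_sub]
    · show tauP p * psi p (i + j) = tauP p * psi p i * psi p j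
      rw [mul_assoc, psi_add]
    · show psi p (j - i) = tauP p * psi p i * (tauP p * psi p j)
      symm
      calc tauP p * psi p i * (tauP p * psi p j)
          = tauP p * (psi p i * tauP p) * psi p j := by group
        _ = tauP p * (tauP p * psi p (-i)) * psi p j := by rw [psi_tau]
        _ = psi p (-i) * psi p j := by rw [← mul_assoc, tau2, one_mul]
        _ = psi p (j - i) := by rw [← psi_add, neg_add_eq_sub]

@[simp] lemma phi_r (i : ZMod 6) : phi p (.r i) = psi p i := rfl
@[simp] lemma phi_sr (i : ZMod 6) : phi p (.sr i) = tauP p * psi p i := rfl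

section
variable [Fact (Nat.Prime p)]

lemma two_ne (h5 : 5 ≤ p) : (2 : ZMod p) ≠ 0 := by
  intro h
  rw [show ((2 : ZMod p)) = ((2 : ℕ) : ZMod p) by norm_cast,
    ZMod.natCast_eq_zero_iff] at h
  have := Nat.le_of_dvd (by norm_num) h
  omega

lemma three_ne (h5 : 5 ≤ p) : (3 : ZMod p) ≠ 0 := by
  intro h
  rw [show ((3 : ZMod p)) = ((3 : ℕ) : ZMod p) by norm_cast,
    ZMod.natCast_eq_zero_iff] at h
  have := Nat.le_of_dvd (by norm_num) h
  omega

def e1 (p : ℕ) [Fact (Nat.Prime p)] : NZ p := ⟨(1, 0), by simp [Prod.ext_iff]⟩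
def e2 (p : ℕ) [Fact (Nat.Prime p)] : NZ p := ⟨(0, 1), by simp [Prod.ext_iff]⟩

@[simp] lemma e1_coe : (e1 p).1 = (1, 0) := rfl
@[simp] lemma e2_coe : (e2 p).1 = (0, 1) := rfl

lemma phi_inj (h5 : 5 ≤ p) : Function.Injective (phi p) := by
  rw [injective_iff_map_eq_one]
  rintro (i | i) h
  · simp only [phi_r] at h
    have hv := ZMod.val_lt i
    have h0 : i.val = 0 := by
      set k := i.val with hk
      interval_cases k
      · rfl
      all_goals {
        exfalso
        have hfix : (rot6P p ^ i.val) (e1 p) = e1 p := by rw [← psi, h]; rfl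
        rw [← hk] at hfix
        replace hfix := Subtype.ext_iff.mp hfix
        simp [pow_succ, Equiv.Perm.mul_apply, Prod.ext_iff] at hfix
        all_goals exact two_ne h5 (by linear_combination -hfix) }
    have : i = 0 := by rwa [ZMod.val_eq_zero] at h0
    rw [this, DihedralGroup.one_def]
  · exfalso
    simp only [phi_sr] at h
    have hv := ZMod.val_lt i
    set k := i.val with hk
    interval_cases k
    all_goals {
      first
      | { have hfix : (tauP p * rot6P p ^ i.val) (e1 p) = e1 p := by
            rw [← psi, h]; rfl
          rw [← hk] at hfix
          replace hfix := Subtype.ext_iff.mp hfix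
          simp [pow_succ, Equiv.Perm.mul_apply, Prod.ext_iff] at hfix
          all_goals exact two_ne h5 (by linear_combination -hfix) }
      | { have hfix : (tauP p * rot6P p ^ i.val) (e2 p) = e2 p := by
            rw [← psi, h]; rfl
          rw [← hk] at hfix
          replace hfix := Subtype.ext_iff.mp hfix
          simp [pow_succ, Equiv.Perm.mul_apply, Prod.ext_iff] at hfix
          all_goals exact two_ne h5 (by linear_combination -hfix) } }

lemma phi_range : (phi p).range = Subgroup.closure {rot6P p, tauP p} := by
  apply le_antisymm
  · rintro x ⟨d, rfl⟩
    have hσ : rot6P p ∈ Subgroup.closure {rot6P p, tauP p} :=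
      Subgroup.subset_closure (Set.mem_insert _ _)
    have hτ : tauP p ∈ Subgroup.closure {rot6P p, tauP p} :=
      Subgroup.subset_closure (Set.mem_insert_of_mem _ rfl)
    cases d with
    | r i => exact pow_mem hσ _
    | sr i => exact mul_mem hτ (pow_mem hσ _)
  · rw [Subgroup.closure_le]
    rintro x (rfl | rfl)
    · exact ⟨.r 1, by show psi p 1 = rot6P p; rw [psi, show (1 : ZMod 6).val = 1 from rfl, pow_one]⟩
    · exact ⟨.sr 0, by show tauP p * psi p 0 = tauP p; rw [psi_zero, mul_one]⟩

lemma card_ne {α : Type*} [Fintype α] [DecidableEq α] (a : α) :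
    Nat.card {x : α // x ≠ a} = Nat.card α - 1 := by
  have h := Nat.card_congr (Equiv.sumCompl (· = a))
  rw [Nat.card_sum, Nat.card_eq_fintype_card (α := {x // x = a}),
    Fintype.card_subtype_eq] at h
  have h2 : Nat.card {x : α // ¬ x = a} = Nat.card {x : α // x ≠ a} := rfl
  rw [h2] at h
  omega

lemma card_nz : Nat.card (NZ p) = p ^ 2 - 1 := by
  have h : Nat.card (NZ p) = Nat.card {v : ZMod p × ZMod p // v ≠ 0} := rfl
  rw [h, card_ne, Nat.card_prod, Nat.card_zmod, sq]

lemma card_nonzero : Nat.card {a : ZMod p // a ≠ 0} = p - 1 := by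
  rw [card_ne, Nat.card_zmod]

lemma card_line (g : Equiv.Perm (NZ p))
    (w : ZMod p → ZMod p × ZMod p) (s : ZMod p × ZMod p → ZMod p)
    (hw0 : w 0 = 0) (hsw : ∀ a, s (w a) = a)
    (hfix : ∀ v : NZ p, g v = v ↔ v.1 = w (s v.1)) :
    Nat.card {v : NZ p // g v = v} = p - 1 := by
  have e : {v : NZ p // g v = v} ≃ {a : ZMod p // a ≠ 0} :=
    { toFun := fun v => ⟨s v.1.1, fun h0 => v.1.2 (by
        have := (hfix v.1).1 v.2
        rw [this, h0, hw0])⟩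
      invFun := fun a => ⟨⟨w a.1, fun h0 => a.2 (by
        have : s (w a.1) = s 0 := by rw [h0]
        rwa [hsw, ← hw0, hsw] at this)⟩, by
        refine (hfix _).2 ?_
        show w a.1 = w (s (w a.1))
        rw [hsw]⟩
      left_inv := fun v => Subtype.ext (Subtype.ext ((hfix v.1).1 v.2).symm)
      right_inv := fun a => Subtype.ext (hsw a.1) }
  rw [Nat.card_congr e, card_nonzero]

lemma card_rot (h5 : 5 ≤ p) (k : ℕ) (hk1 : 1 ≤ k) (hk5 : k ≤ 5) :
    Nat.card {v : NZ p // (rot6P p ^ k) v = v} = 0 := by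
  have h2 := two_ne (p := p) h5
  have h3 := three_ne (p := p) h5
  have : IsEmpty {v : NZ p // (rot6P p ^ k) v = v} := by
    constructor
    rintro ⟨v, hfix⟩
    replace hfix := Subtype.ext_iff.mp hfix
    interval_cases k <;>
      simp only [pow_succ, pow_zero, one_mul, Equiv.Perm.mul_apply, rot6P_apply,
        Prod.ext_iff] at hfix <;>
      obtain ⟨⟨l, m⟩, hne⟩ := v <;> dsimp only at hfix <;> apply hne
    · have hl : l = 0 := by linear_combination -hfix.2
      have hm : m = 0 := by linear_combination hfix.1 - hfix.2
      rw [hl, hm]; rfl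
    · have h3l : (3 : ZMod p) * l = 0 := by linear_combination -hfix.1 - hfix.2
      have hl : l = 0 := (mul_eq_zero.mp h3l).resolve_left h3
      have hm : m = 0 := by linear_combination hfix.1 + 2 * hl
      rw [hl, hm]; rfl
    · have h2l : (2 : ZMod p) * l = 0 := by linear_combination -hfix.1
      have h2m : (2 : ZMod p) * m = 0 := by linear_combination -hfix.2
      have hl : l = 0 := (mul_eq_zero.mp h2l).resolve_left h2
      have hm : m = 0 := (mul_eq_zero.mp h2m).resolve_left h2
      rw [hl, hm]; rfl
    · have h3m : (3 : ZMod p) * m = 0 := by linear_combination -hfix.1 - hfix.2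
      have hm : m = 0 := (mul_eq_zero.mp h3m).resolve_left h3
      have hl : l = 0 := by linear_combination -hfix.1 - hm
      rw [hl, hm]; rfl
    · have hm : m = 0 := by linear_combination -hfix.1
      have hl : l = 0 := by linear_combination hfix.2 + hm
      rw [hl, hm]; rfl
  exact Nat.card_of_isEmpty

lemma card_refl (h5 : 5 ≤ p) (k : ℕ) (hk : k ≤ 5) :
    Nat.card {v : NZ p // (tauP p * rot6P p ^ k) v = v} = p - 1 := by
  have h2 := two_ne (p := p) h5
  interval_cases k
  · refine card_line _ (fun a => (a, a)) Prod.fst (by norm_num [Prod.ext_iff]) (fun a => rfl) ?_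
    intro v
    refine Iff.trans Subtype.ext_iff ?_
    simp only [Equiv.Perm.mul_apply, pow_succ, pow_zero, one_mul, mul_one, Equiv.Perm.one_apply, tauP_apply, rot6P_apply,
      Prod.ext_iff]
    constructor <;> rintro ⟨h1, h2⟩ <;> refine ⟨?_, ?_⟩ <;>
      first
        | trivial
        | linear_combination h1
        | linear_combination -h1
        | linear_combination h2
        | linear_combination -h2
        | linear_combination 2 * h1
        | linear_combination -2 * h1
        | linear_combination 2 * h2
        | linear_combination -2 * h2
        | linear_combination h1 - h2
        | linear_combination h2 - h1
        | linear_combination h1 + h2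
        | linear_combination -h1 - h2
  · refine card_line _ (fun a => (a, 2 * a)) Prod.fst (by norm_num [Prod.ext_iff]) (fun a => rfl) ?_
    intro v
    refine Iff.trans Subtype.ext_iff ?_
    simp only [Equiv.Perm.mul_apply, pow_succ, pow_zero, one_mul, mul_one, Equiv.Perm.one_apply, tauP_apply, rot6P_apply,
      Prod.ext_iff]
    constructor <;> rintro ⟨h1, h2⟩ <;> refine ⟨?_, ?_⟩ <;>
      first
        | trivial
        | linear_combination h1
        | linear_combination -h1
        | linear_combination h2
        | linear_combination -h2
        | linear_combination 2 * h1
        | linear_combination -2 * h1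
        | linear_combination 2 * h2
        | linear_combination -2 * h2
        | linear_combination h1 - h2
        | linear_combination h2 - h1
        | linear_combination h1 + h2
        | linear_combination -h1 - h2
  · refine card_line _ (fun a => (0, a)) Prod.snd (by norm_num [Prod.ext_iff]) (fun a => rfl) ?_
    intro v
    refine Iff.trans Subtype.ext_iff ?_
    simp only [Equiv.Perm.mul_apply, pow_succ, pow_zero, one_mul, mul_one, Equiv.Perm.one_apply, tauP_apply, rot6P_apply,
      Prod.ext_iff]
    constructor <;> rintro ⟨h1, h2⟩ <;> refine ⟨?_, ?_⟩ <;>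
      first
        | trivial
        | linear_combination h1
        | linear_combination -h1
        | linear_combination h2
        | linear_combination -h2
        | linear_combination 2 * h1
        | linear_combination -2 * h1
        | linear_combination 2 * h2
        | linear_combination -2 * h2
        | linear_combination h1 - h2
        | linear_combination h2 - h1
        | linear_combination h1 + h2
        | linear_combination -h1 - h2
  · refine card_line _ (fun a => (a, -a)) Prod.fst (by norm_num [Prod.ext_iff]) (fun a => rfl) ?_
    intro v
    refine Iff.trans Subtype.ext_iff ?_
    simp only [Equiv.Perm.mul_apply, pow_succ, pow_zero, one_mul, mul_one, Equiv.Perm.one_apply, tauP_apply, rot6P_apply,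
      Prod.ext_iff]
    constructor <;> rintro ⟨h1, h2⟩ <;> refine ⟨?_, ?_⟩ <;>
      first
        | trivial
        | linear_combination h1
        | linear_combination -h1
        | linear_combination h2
        | linear_combination -h2
        | linear_combination 2 * h1
        | linear_combination -2 * h1
        | linear_combination 2 * h2
        | linear_combination -2 * h2
        | linear_combination h1 - h2
        | linear_combination h2 - h1
        | linear_combination h1 + h2
        | linear_combination -h1 - h2
  · refine card_line _ (fun a => (a, 0)) Prod.fst (by norm_num [Prod.ext_iff]) (fun a => rfl) ?_
    intro v
    refine Iff.trans Subtype.ext_iff ?_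
    simp only [Equiv.Perm.mul_apply, pow_succ, pow_zero, one_mul, mul_one, Equiv.Perm.one_apply, tauP_apply, rot6P_apply,
      Prod.ext_iff]
    constructor <;> rintro ⟨h1, h2⟩ <;> refine ⟨?_, ?_⟩ <;>
      first
        | trivial
        | linear_combination h1
        | linear_combination -h1
        | linear_combination h2
        | linear_combination -h2
        | linear_combination 2 * h1
        | linear_combination -2 * h1
        | linear_combination 2 * h2
        | linear_combination -2 * h2
        | linear_combination h1 - h2
        | linear_combination h2 - h1
        | linear_combination h1 + h2
        | linear_combination -h1 - h2
  · refine card_line _ (fun a => (2 * a, a)) Prod.snd (by norm_num [Prod.ext_iff]) (fun a => rfl) ?_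
    intro v
    refine Iff.trans Subtype.ext_iff ?_
    simp only [Equiv.Perm.mul_apply, pow_succ, pow_zero, one_mul, mul_one, Equiv.Perm.one_apply, tauP_apply, rot6P_apply,
      Prod.ext_iff]
    constructor <;> rintro ⟨h1, h2⟩ <;> refine ⟨?_, ?_⟩ <;>
      first
        | trivial
        | linear_combination h1
        | linear_combination -h1
        | linear_combination h2
        | linear_combination -h2
        | linear_combination 2 * h1
        | linear_combination -2 * h1
        | linear_combination 2 * h2
        | linear_combination -2 * h2
        | linear_combination h1 - h2
        | linear_combination h2 - h1
        | linear_combination h1 + h2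
        | linear_combination -h1 - h2

end

def dsum : ZMod 6 ⊕ ZMod 6 ≃ DihedralGroup 6 where
  toFun x := match x with | .inl i => .r i | .inr i => .sr i
  invFun d := match d with | .r i => .inl i | .sr i => .inr i
  left_inv := by rintro (i | i) <;> rfl
  right_inv := by rintro (i | i) <;> rfl

end Dih12

/-- The dihedral group of order 12 generated by the rotation `(l,m) ↦ (m, m-l)`
and the reflection `(l,m) ↦ (m,l)` acting on `(ZMod p)² \ {0}` has
`(p-1)(p+7)/12` orbits for a prime `p ≥ 5`. -/
theorem dihedral12_orbit_count (p : ℕ) (hp : p.Prime) (h5 : 5 ≤ p) :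
    Nat.card (MulAction.orbitRel.Quotient
      (Subgroup.closure {rot6P p, tauP p} : Subgroup (Equiv.Perm (NZ p))) (NZ p))
      = (p - 1) * (p + 7) / 12 := by
  haveI : Fact p.Prime := ⟨hp⟩
  haveI : NeZero p := ⟨hp.ne_zero⟩
  haveI : Finite (NZ p) := by
    have h : Finite {v : ZMod p × ZMod p // v ≠ 0} := inferInstance
    exact h
  haveI : Fintype (NZ p) := Fintype.ofFinite _
  set G := (Subgroup.closure {rot6P p, tauP p} : Subgroup (Equiv.Perm (NZ p))) with hG
  haveI : Fintype G := Fintype.ofFinite _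
  haveI : Fintype (MulAction.orbitRel.Quotient G (NZ p)) := Fintype.ofFinite _
  haveI : ∀ a : G, Fintype (MulAction.fixedBy (NZ p) a) := fun a => Fintype.ofFinite _
  have hinj := Dih12.phi_inj (p := p) h5
  let em : DihedralGroup 6 ≃* G :=
    (MonoidHom.ofInjective hinj).trans (MulEquiv.subgroupCongr Dih12.phi_range)
  have he : ∀ d, ((em d : G) : Equiv.Perm (NZ p)) = Dih12.phi p d := fun d => rfl
  have burn := MulAction.sum_card_fixedBy_eq_card_orbits_mul_card_group G (NZ p)
  rw [← Equiv.sum_comp em.toEquiv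
    (fun a : G => Fintype.card (MulAction.fixedBy (NZ p) a))] at burn
  have hterm : ∀ d : DihedralGroup 6,
      Fintype.card (MulAction.fixedBy (NZ p) (em.toEquiv d)) =
      Nat.card {v : NZ p // Dih12.phi p d v = v} := by
    intro d
    rw [← Nat.card_eq_fintype_card]
    exact Nat.card_congr (Equiv.subtypeEquivRight fun v => Iff.rfl)
  simp only [hterm] at burn
  have hsum : ∑ d : DihedralGroup 6, Nat.card {v : NZ p // Dih12.phi p d v = v}
      = (p ^ 2 - 1) + 6 * (p - 1) := by
    rw [← Equiv.sum_comp Dih12.dsum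
      (fun d => Nat.card {v : NZ p // Dih12.phi p d v = v}), Fintype.sum_sum_type]
    have hdl : ∀ i : ZMod 6, Dih12.dsum (Sum.inl i) = DihedralGroup.r i := fun _ => rfl
    have hdr : ∀ i : ZMod 6, Dih12.dsum (Sum.inr i) = DihedralGroup.sr i := fun _ => rfl
    simp only [hdl, hdr]
    have hr : (∑ i : ZMod 6,
        Nat.card {v : NZ p // Dih12.phi p (.r i) v = v}) = p ^ 2 - 1 := by
      rw [Finset.sum_eq_single 0]
      · have e0 : {v : NZ p // Dih12.phi p (.r 0) v = v} ≃ NZ p := by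
          rw [← DihedralGroup.one_def, map_one]
          exact Equiv.subtypeUnivEquiv (fun v => rfl)
        rw [Nat.card_congr e0, Dih12.card_nz]
      · intro i _ hi
        have hv1 : 1 ≤ i.val := by
          rcases Nat.eq_zero_or_pos i.val with h0 | h0
          · exact absurd ((ZMod.val_eq_zero _).mp h0) hi
          · exact h0
        have hv5 : i.val ≤ 5 := by have := ZMod.val_lt i; omega
        exact Dih12.card_rot h5 i.val hv1 hv5
      · intro h; exact absurd (Finset.mem_univ _) h
    have hsr : (∑ i : ZMod 6,
        Nat.card {v : NZ p // Dih12.phi p (.sr i) v = v}) = 6 * (p - 1) := by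
      have hc : ∀ i : ZMod 6,
          Nat.card {v : NZ p // Dih12.phi p (.sr i) v = v} = p - 1 := by
        intro i
        have hv5 : i.val ≤ 5 := by have := ZMod.val_lt i; omega
        exact Dih12.card_refl h5 i.val hv5
      rw [Finset.sum_congr rfl (fun i _ => hc i), Finset.sum_const, Finset.card_univ]
      rw [ZMod.card, smul_eq_mul]
    rw [hr, hsr]
  rw [hsum] at burn
  have hcard : Fintype.card G = 12 := by
    rw [← Nat.card_eq_fintype_card, Nat.card_congr em.symm.toEquiv, DihedralGroup.nat_card]
  rw [hcard] at burn
  rw [Nat.card_eq_fintype_card]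
  have hOm : Fintype.card (MulAction.orbitRel.Quotient G (NZ p)) =
      Fintype.card (Quotient (MulAction.orbitRel G (NZ p))) := rfl
  rw [hOm]
  obtain ⟨q, rfl⟩ : ∃ q, p = q + 1 := ⟨p - 1, by omega⟩
  have h1 : (q + 1) ^ 2 = q * q + 2 * q + 1 := by ring
  have h2 : (q + 1 - 1) * (q + 1 + 7) = q * q + 8 * q := by
    rw [Nat.add_sub_cancel]; ring
  rw [h1] at burn
  rw [h2]
  generalize hQ : q * q = Q at burn ⊢
  omega
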